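/- arXiv:2603.17448 — 7 statements merged into one kernel-verified Lean document; each statement's English description precedes it below -/
import Mathlib

section
/- If r(x) > 0 on an interval between two consecutive zeros of f' containing a zero x* of f, then h(x) = f(x)/f'(x) satisfies h'(x*) = 1, h(x) < 0 for x ∈ (x', x*), and h(x) > 0 for x ∈ (x*, x''). -/
open Set

/- Where `f'` has no zero it has constant sign (Darboux), so `f` is strictly monotone there and
changes sign exactly at its zero `x*`, in the same direction as `f'`. At `x*` the quotient rule
gives `h' = (f'² - f f'') / f'² = 1`. Since `deriv f x ≠ 0` already forces `f` to be
differentiable at `x`, no separate differentiability of `f` is needed. -/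

theorem hasDerivAt_div_deriv_of_eq_zero {f : ℝ → ℝ} {x : ℝ} (hf' : deriv f x ≠ 0)
    (hf'' : DifferentiableAt ℝ (deriv f) x) (hfx : f x = 0) :
    HasDerivAt (fun t => f t / deriv f t) 1 x := by
  have hquot := (differentiableAt_of_deriv_ne_zero hf').hasDerivAt.div hf''.hasDerivAt hf'
  rwa [hfx, zero_mul, sub_zero, ← sq, div_self (pow_ne_zero 2 hf')] at hquot

theorem sign_div_deriv_of_deriv_pos {f : ℝ → ℝ} {a b z : ℝ}
    (hpos : ∀ x ∈ Ioo a b, 0 < deriv f x) (hz : z ∈ Ioo a b) (hfz : f z = 0) :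
    (∀ x ∈ Ioo a z, f x / deriv f x < 0) ∧ ∀ x ∈ Ioo z b, 0 < f x / deriv f x := by
  have hcont : ContinuousOn f (Ioo a b) := fun x hx =>
    (differentiableAt_of_deriv_ne_zero (hpos x hx).ne').continuousAt.continuousWithinAt
  have hmono : StrictMonoOn f (Ioo a b) :=
    strictMonoOn_of_deriv_pos (convex_Ioo a b) hcont (by rwa [interior_Ioo])
  constructor
  · intro x hx
    have hxab : x ∈ Ioo a b := ⟨hx.1, hx.2.trans hz.2⟩
    have hfx : f x < 0 := hfz ▸ hmono hxab hz hx.2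
    exact div_neg_of_neg_of_pos hfx (hpos x hxab)
  · intro x hx
    have hxab : x ∈ Ioo a b := ⟨hz.1.trans hx.1, hx.2⟩
    have hfx : 0 < f x := hfz ▸ hmono hz hxab hx.1
    exact div_pos hfx (hpos x hxab)

theorem sign_div_deriv_of_deriv_ne_zero {f : ℝ → ℝ} {a b z : ℝ}
    (hne : ∀ x ∈ Ioo a b, deriv f x ≠ 0) (hz : z ∈ Ioo a b) (hfz : f z = 0) :
    (∀ x ∈ Ioo a z, f x / deriv f x < 0) ∧ ∀ x ∈ Ioo z b, 0 < f x / deriv f x := by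
  have hderiv : ∀ x ∈ Ioo a b, HasDerivWithinAt f (deriv f x) (Ioo a b) x := fun x hx =>
    (differentiableAt_of_deriv_ne_zero (hne x hx)).hasDerivAt.hasDerivWithinAt
  rcases hasDerivWithinAt_forall_lt_or_forall_gt_of_forall_ne (convex_Ioo a b) hderiv hne
    with hneg | hpos
  · -- `f / f' = (-f) / (-f')`, and `-f` has positive derivative
    have hneg' : ∀ x ∈ Ioo a b, 0 < deriv (-f) x := fun x hx => by
      simpa only [deriv.neg, neg_pos] using hneg x hx
    have hquot : ∀ x, (-f) x / deriv (-f) x = f x / deriv f x := fun x => by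
      simp only [Pi.neg_apply, deriv.neg, neg_div_neg_eq]
    simpa only [hquot] using sign_div_deriv_of_deriv_pos hneg' hz (by simp [hfz])
  · exact sign_div_deriv_of_deriv_pos hpos hz hfz

theorem sign_of_h_general (f : ℝ → ℝ) (x' x'' xs : ℝ)
    (hf2 : Differentiable ℝ (deriv f))
    (hcons : ∀ x ∈ Set.Ioo x' x'', deriv f x ≠ 0)
    (hxs : xs ∈ Set.Ioo x' x'') (hfxs : f xs = 0) :
    deriv (fun t => f t / deriv f t) xs = 1
    ∧ (∀ x ∈ Set.Ioo x' xs, f x / deriv f x < 0)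
    ∧ (∀ x ∈ Set.Ioo xs x'', 0 < f x / deriv f x) :=
  ⟨(hasDerivAt_div_deriv_of_eq_zero (hcons xs hxs) (hf2 xs) hfxs).deriv,
    sign_div_deriv_of_deriv_ne_zero hcons hxs hfxs⟩

theorem sign_of_h (r f : ℝ → ℝ) (x' x'' xs : ℝ) (hlt : x' < x'')
    (hr : ContinuousOn r (Set.Ioo x' x''))
    (hrpos : ∀ x ∈ Set.Ioo x' x'', 0 < r x)
    (hf1 : Differentiable ℝ f) (hf2 : Differentiable ℝ (deriv f))
    (hode : ∀ x ∈ Set.Ioo x' x'', deriv (deriv f) x + r x * f x = 0)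
    (hnt : ∃ x ∈ Set.Ioo x' x'', f x ≠ 0)
    (hz' : deriv f x' = 0) (hz'' : deriv f x'' = 0)
    (hcons : ∀ x ∈ Set.Ioo x' x'', deriv f x ≠ 0)
    (hxs : xs ∈ Set.Ioo x' x'') (hfxs : f xs = 0)
    (huniq : ∀ x ∈ Set.Ioo x' x'', f x = 0 → x = xs) :
    deriv (fun t => f t / deriv f t) xs = 1
    ∧ (∀ x ∈ Set.Ioo x' xs, f x / deriv f x < 0)
    ∧ (∀ x ∈ Set.Ioo xs x'', 0 < f x / deriv f x) :=
  sign_of_h_general f x' x'' xs hf2 hcons hxs hfxs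
end

section
/- For the Halley iteration function g(x) = x − 2h(x)/(2 + r(x)h(x)²) associated with the Riccati equation h' = 1 + r h², at a zero x* of h one has g(x*) = x*, g'(x*) = 0, g''(x*) = 0, and g'''(x*) = r(x*); hence the error satisfies e_{n+1} = (r(x*)/6) e_n³ + O(e_n⁴), i.e. the iteration has third-order convergence. -/
open Asymptotics Filter

lemma step_bigO {f : ℝ → ℝ} {x₀ : ℝ} {k : ℕ}
    (hf : ∀ᶠ x in nhds x₀, DifferentiableAt ℝ f x) (h0 : f x₀ = 0)
    (hd : (deriv f) =O[nhds x₀] fun x => (x - x₀) ^ k) :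
    f =O[nhds x₀] fun x => (x - x₀) ^ (k + 1) := by
  rcases hd.exists_nonneg with ⟨C, hC0, hC⟩
  rw [isBigOWith_iff] at hC
  obtain ⟨ε, hε, hball⟩ := Metric.eventually_nhds_iff_ball.mp (hf.and hC)
  rw [isBigO_iff]
  refine ⟨C, Metric.eventually_nhds_iff_ball.mpr ⟨ε, hε, fun x hx => ?_⟩⟩
  have hseg : segment ℝ x₀ x ⊆ Metric.ball x₀ ε :=
    (convex_ball x₀ ε).segment_subset (Metric.mem_ball_self hε) hx
  have key : ‖f x - f x₀‖ ≤ (C * |x - x₀| ^ k) * ‖x - x₀‖ := by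
    refine Convex.norm_image_sub_le_of_norm_deriv_le
      (fun y hy => (hball y (hseg hy)).1) (fun y hy => ?_) (convex_segment _ _)
      (left_mem_segment ℝ x₀ x) (right_mem_segment ℝ x₀ x)
    have h1 := (hball y (hseg hy)).2
    have h2 : |y - x₀| ≤ |x - x₀| := by
      rcases hy with ⟨a, b, ha, hb, hab, rfl⟩
      have : a • x₀ + b • x - x₀ = b * (x - x₀) := by
        have ha' : a = 1 - b := by linarith
        simp only [smul_eq_mul, ha']; ring
      rw [this, abs_mul, abs_of_nonneg hb]
      nlinarith [abs_nonneg (x - x₀)]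
    calc ‖deriv f y‖ ≤ C * ‖(y - x₀) ^ k‖ := h1
      _ ≤ C * |x - x₀| ^ k := by
          rw [Real.norm_eq_abs, abs_pow]
          exact mul_le_mul_of_nonneg_left (pow_le_pow_left₀ (abs_nonneg _) h2 k) hC0
  rw [h0, sub_zero] at key
  calc ‖f x‖ ≤ (C * |x - x₀| ^ k) * ‖x - x₀‖ := key
    _ = C * ‖(x - x₀) ^ (k + 1)‖ := by
        rw [Real.norm_eq_abs, Real.norm_eq_abs, abs_pow, pow_succ]; ring

open scoped ContDiff

theorem halley_third_order (r h : ℝ → ℝ) (xs : ℝ)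
    (hr : ContDiff ℝ (⊤ : ℕ∞) r) (hh : ContDiff ℝ (⊤ : ℕ∞) h)
    (hric : ∀ᶠ x in nhds xs, deriv h x = 1 + r x * h x ^ 2)
    (hhx : h xs = 0) :
    (fun x => x - 2 * h x / (2 + r x * h x ^ 2)) xs = xs
    ∧ deriv (fun x => x - 2 * h x / (2 + r x * h x ^ 2)) xs = 0
    ∧ deriv^[2] (fun x => x - 2 * h x / (2 + r x * h x ^ 2)) xs = 0
    ∧ deriv^[3] (fun x => x - 2 * h x / (2 + r x * h x ^ 2)) xs = r xs
    ∧ (fun x => (x - 2 * h x / (2 + r x * h x ^ 2)) - xs - r xs / 6 * (x - xs) ^ 3)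
        =O[nhds xs] (fun x => (x - xs) ^ 4) := by
  have h1le : (1 : WithTop ℕ∞) ≤ ∞ := by exact_mod_cast (le_top : (1:ℕ∞) ≤ ⊤)
  have hr1 : ContDiff ℝ ∞ r := hr.of_le (by simp)
  have hh1 : ContDiff ℝ ∞ h := hh.of_le (by simp)
  have hdr : ContDiff ℝ ∞ (deriv r) := (contDiff_infty_iff_deriv.mp hr1).2
  have hdh : ContDiff ℝ ∞ (deriv h) := (contDiff_infty_iff_deriv.mp hh1).2
  have hhd : Differentiable ℝ h := hh1.differentiable (by simp)
  have hrd : Differentiable ℝ r := hr1.differentiable (by simp)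
  have hdhd : Differentiable ℝ (deriv h) := hdh.differentiable (by simp)
  have hdhxs : deriv h xs = 1 := by rw [hric.self_of_nhds, hhx]; ring
  -- the open set
  have hDcont : ContinuousAt (fun x => 2 + r x * h x ^ 2) xs :=
    (continuous_const.add (hrd.continuous.mul ((hhd.continuous).pow 2))).continuousAt
  have hDne : ∀ᶠ x in nhds xs, 2 + r x * h x ^ 2 ≠ 0 :=
    hDcont.eventually_ne (by simp [hhx])
  obtain ⟨s, hss, hso, hxss⟩ := eventually_nhds_iff.mp (hDne.and hric)
  have hsmem : ∀ᶠ x in nhds xs, x ∈ s := hso.eventually_mem hxss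
  set Q : ℝ → ℝ := fun x =>
      (2 * r x + 2 * deriv r x * h x + 3 * r x ^ 2 * h x ^ 2) / (2 + r x * h x ^ 2) ^ 2
    with hQdef
  have hnum : ContDiff ℝ ∞ (fun x => 2 * r x + 2 * deriv r x * h x + 3 * r x ^ 2 * h x ^ 2) := by
    exact ((contDiff_const.mul hr1).add ((contDiff_const.mul hdr).mul hh1)).add
      ((contDiff_const.mul (hr1.pow 2)).mul (hh1.pow 2))
  have hden : ContDiff ℝ ∞ (fun x => 2 + r x * h x ^ 2) :=
    contDiff_const.add (hr1.mul (hh1.pow 2))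
  have hQs : ContDiffOn ℝ ∞ Q s :=
    hnum.contDiffOn.div (hden.pow 2).contDiffOn (fun x hx => pow_ne_zero 2 (hss x hx).1)
  have hinf1 : (∞ : WithTop ℕ∞) + 1 ≤ ∞ := by
    norm_num
  have hdQs : ContDiffOn ℝ ∞ (deriv Q) s := hQs.deriv_of_isOpen hso hinf1
  have hQdiff : ∀ x ∈ s, DifferentiableAt ℝ Q x := fun x hx =>
    (hQs.differentiableOn (by simp)).differentiableAt (hso.mem_nhds hx)
  have hdQdiff : ∀ x ∈ s, DifferentiableAt ℝ (deriv Q) x := fun x hx =>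
    (hdQs.differentiableOn (by simp)).differentiableAt (hso.mem_nhds hx)
  -- derivative of g on s
  have hg : ∀ x ∈ s, HasDerivAt (fun x => x - 2 * h x / (2 + r x * h x ^ 2))
      (h x ^ 2 * Q x) x := by
    intro x hx
    obtain ⟨hdx, hrx⟩ := hss x hx
    have Hh : HasDerivAt h (1 + r x * h x ^ 2) x := hrx ▸ (hhd x).hasDerivAt
    have Hr : HasDerivAt r (deriv r x) x := (hrd x).hasDerivAt
    have HD : HasDerivAt (fun y => 2 + r y * h y ^ 2)
        (deriv r x * h x ^ 2 + r x * (2 * h x * (1 + r x * h x ^ 2))) x := by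
      have := (hasDerivAt_const x (2 : ℝ)).add (Hr.mul (Hh.pow 2))
      refine this.congr_deriv ?_
      push_cast [Pi.pow_apply]; ring
    have HN : HasDerivAt (fun y => 2 * h y) (2 * (1 + r x * h x ^ 2)) x := Hh.const_mul 2
    have := (hasDerivAt_id x).sub (HN.div HD hdx)
    refine this.congr_deriv ?_
    rw [hQdef]
    field_simp
    ring
  have hgev : deriv (fun x => x - 2 * h x / (2 + r x * h x ^ 2)) =ᶠ[nhds xs]
      fun x => h x ^ 2 * Q x := by
    filter_upwards [hsmem] with x hx using (hg x hx).deriv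
  -- derivative of h^2 * Q on s
  set G2 : ℝ → ℝ := fun x => 2 * h x * deriv h x * Q x + h x ^ 2 * deriv Q x with hG2def
  have hG2s : ContDiffOn ℝ ∞ G2 s :=
    (((contDiffOn_const.mul hh1.contDiffOn).mul hdh.contDiffOn).mul hQs).add
      ((hh1.pow 2).contDiffOn.mul hdQs)
  have ed1 : ∀ x ∈ s, HasDerivAt (fun y => h y ^ 2 * Q y) (G2 x) x := by
    intro x hx
    have := ((hhd x).hasDerivAt.pow 2).mul ((hQdiff x hx).hasDerivAt)
    refine this.congr_deriv ?_
    rw [hG2def]; push_cast [Pi.pow_apply]; ring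
  have e3 : deriv (fun y => h y ^ 2 * Q y) =ᶠ[nhds xs] G2 := by
    filter_upwards [hsmem] with x hx using (ed1 x hx).deriv
  -- derivative of G2 at xs
  have hQxs : Q xs = r xs / 2 := by rw [hQdef]; simp [hhx]; ring
  have hG2deriv : deriv G2 xs = r xs := by
    have A := (((hhd xs).hasDerivAt.const_mul 2).mul ((hdhd xs).hasDerivAt)).mul
      ((hQdiff xs hxss).hasDerivAt)
    have B := ((hhd xs).hasDerivAt.pow 2).mul ((hdQdiff xs hxss).hasDerivAt)
    have := (A.add B).deriv
    rw [hG2def]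
    rw [show (fun x => 2 * h x * deriv h x * Q x + h x ^ 2 * deriv Q x) =
      ((fun y => 2 * h y) * deriv h * Q + h ^ 2 * deriv Q) from rfl, this]
    simp [hhx, hdhxs, hQxs]
    ring
  -- parts
  have part1 : (fun x => x - 2 * h x / (2 + r x * h x ^ 2)) xs = xs := by simp [hhx]
  have part2 : deriv (fun x => x - 2 * h x / (2 + r x * h x ^ 2)) xs = 0 := by
    rw [(hg xs hxss).deriv, hhx]; ring
  have part3 : deriv (deriv (fun x => x - 2 * h x / (2 + r x * h x ^ 2))) xs = 0 := by
    rw [hgev.deriv_eq, (ed1 xs hxss).deriv, hG2def]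
    simp [hhx]
  have part4 : deriv (deriv (deriv (fun x => x - 2 * h x / (2 + r x * h x ^ 2)))) xs = r xs := by
    rw [(hgev.deriv.trans e3).deriv_eq, hG2deriv]
  refine ⟨part1, part2, part3, part4, ?_⟩
  -- big-O part
  have hG2xs : G2 xs = 0 := by rw [hG2def]; simp [hhx]
  have hdG2s : ContDiffOn ℝ ∞ (deriv G2) s := hG2s.deriv_of_isOpen hso hinf1
  have hddG2s : ContDiffOn ℝ ∞ (deriv (deriv G2)) s := hdG2s.deriv_of_isOpen hso hinf1
  have hG2diff : ∀ x ∈ s, DifferentiableAt ℝ G2 x := fun x hx =>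
    (hG2s.differentiableOn (by simp)).differentiableAt (hso.mem_nhds hx)
  have hdG2diff : ∀ x ∈ s, DifferentiableAt ℝ (deriv G2) x := fun x hx =>
    (hdG2s.differentiableOn (by simp)).differentiableAt (hso.mem_nhds hx)
  have hF3 : (fun x => deriv G2 x - r xs) =O[nhds xs] fun x => (x - xs) ^ 1 := by
    apply step_bigO (k := 0)
    · filter_upwards [hsmem] with x hx using (hdG2diff x hx).sub_const (r xs)
    · rw [hG2deriv]; ring
    · have e : deriv (fun x => deriv G2 x - r xs) = deriv (deriv G2) := by
        funext x; exact deriv_sub_const _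
      rw [e]
      have hc : ContinuousAt (deriv (deriv G2)) xs :=
        hddG2s.continuousOn.continuousAt (hso.mem_nhds hxss)
      simpa using hc.tendsto.isBigO_one (F := ℝ)
  have hF2 : (fun x => G2 x - r xs * (x - xs)) =O[nhds xs] fun x => (x - xs) ^ 2 := by
    apply step_bigO (k := 1)
    · filter_upwards [hsmem] with x hx using
        (hG2diff x hx).sub
          (((differentiableAt_fun_id.sub (differentiableAt_const xs)).const_mul (r xs)))
    · simp [hG2xs]
    · have e : deriv (fun x => G2 x - r xs * (x - xs)) =ᶠ[nhds xs]
          fun x => deriv G2 x - r xs := by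
        filter_upwards [hsmem] with x hx
        have Hp : HasDerivAt (fun y => r xs * (y - xs)) (r xs) x := by
          have := ((hasDerivAt_id x).sub_const xs).const_mul (r xs)
          simp only [id_eq] at this
          refine this.congr_deriv ?_; ring
        exact ((hG2diff x hx).hasDerivAt.sub Hp).deriv
      exact hF3.congr' e.symm EventuallyEq.rfl
  have hF1 : (fun x => h x ^ 2 * Q x - r xs / 2 * (x - xs) ^ 2) =O[nhds xs]
      fun x => (x - xs) ^ 3 := by
    apply step_bigO (k := 2)
    · filter_upwards [hsmem] with x hx using
        ((ed1 x hx).differentiableAt).sub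
          ((((differentiableAt_fun_id.sub (differentiableAt_const xs)).pow 2).const_mul (r xs / 2)))
    · simp [hhx]
    · have e : deriv (fun x => h x ^ 2 * Q x - r xs / 2 * (x - xs) ^ 2) =ᶠ[nhds xs]
          fun x => G2 x - r xs * (x - xs) := by
        filter_upwards [hsmem] with x hx
        have Hp : HasDerivAt (fun y => r xs / 2 * (y - xs) ^ 2) (r xs * (x - xs)) x := by
          have := (((hasDerivAt_id x).sub_const xs).pow 2).const_mul (r xs / 2)
          simp only [id_eq] at this
          refine this.congr_deriv ?_; push_cast; ring
        exact ((ed1 x hx).sub Hp).deriv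
      exact hF2.congr' e.symm EventuallyEq.rfl
  have hF : (fun x => (x - 2 * h x / (2 + r x * h x ^ 2)) - xs - r xs / 6 * (x - xs) ^ 3)
      =O[nhds xs] fun x => (x - xs) ^ (3 + 1) := by
    apply step_bigO (k := 3)
    · filter_upwards [hsmem] with x hx using
        (((hg x hx).differentiableAt).sub (differentiableAt_const xs)).sub
          ((((differentiableAt_fun_id.sub (differentiableAt_const xs)).pow 3).const_mul (r xs / 6)))
    · simp [hhx]
    · have e : deriv (fun x => (x - 2 * h x / (2 + r x * h x ^ 2)) - xs
            - r xs / 6 * (x - xs) ^ 3) =ᶠ[nhds xs]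
          fun x => h x ^ 2 * Q x - r xs / 2 * (x - xs) ^ 2 := by
        filter_upwards [hsmem] with x hx
        have Hp : HasDerivAt (fun y => r xs / 6 * (y - xs) ^ 3) (r xs / 2 * (x - xs) ^ 2) x := by
          have := (((hasDerivAt_id x).sub_const xs).pow 3).const_mul (r xs / 6)
          simp only [id_eq] at this
          refine this.congr_deriv ?_; push_cast; ring
        exact ((((hg x hx).sub_const xs)).sub Hp).deriv
      exact hF1.congr' e.symm EventuallyEq.rfl
  simpa using hF
end

section
/- Let r be positive and non-increasing on (x', x*), where x* is the unique zero of f between consecutive zeros x' < x'' of f'. Then for any initial guess x₀ ∈ (x', x*), the Halley iterates x_{n+1} = x_n − 2h(x_n)/(2 + r(x_n)h(x_n)²) form a monotonically increasing sequence bounded above by x* that converges to x*. -/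
/-!
Halley's method for `f` is Newton's method for `F = f / √f'`: using `f'' = -r f` one finds
`F' = √f' + r f² / (2 f' √f')`, and `t - F / F'` is the Halley step. After replacing `f` by `-f`
we may assume `f' > 0`, so `f < 0` on `(x', x*)`, and there
`F'' = r f / (2 √f') + r' f² / (2 f' √f') + 3 r² f³ / (4 f'² √f') < 0`.
Newton's method for an increasing strictly concave function, started left of its zero, moves
right but stays left of the zero. The iterates therefore increase to a limit in `(x', x*]`, which
is a fixed point of the continuous Halley map unless it is `x*`; but the map has no fixed point in
`(x', x*)`.
-/

open Set Filter Topology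

lemma StrictConcaveOn.sub_div_lt_of_hasDerivAt {F : ℝ → ℝ} {S : Set ℝ} {b z d : ℝ}
    (hF : StrictConcaveOn ℝ S F) (hb : b ∈ S) (hz : z ∈ S) (hbz : b < z)
    (hd : HasDerivAt F d b) (hd0 : 0 < d) (hFz : F z = 0) : b - F b / d < z := by
  have hslope := hF.slope_lt_of_hasDerivAt hb hz hbz hd
  rw [slope_def_field, hFz, div_lt_iff₀ (sub_pos.2 hbz)] at hslope
  have : -F b / d < z - b := by rw [div_lt_iff₀ hd0]; linarith
  rw [neg_div] at this
  linarith

lemma strictMono_tendsto_of_lt_map_lt {g : ℝ → ℝ} {a z : ℝ} {x : ℕ → ℝ}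
    (hg : ∀ t ∈ Ioo a z, t < g t ∧ g t < z) (hgc : ∀ t ∈ Ioo a z, ContinuousAt g t)
    (hx0 : x 0 ∈ Ioo a z) (hx : ∀ n, x (n + 1) = g (x n)) :
    StrictMono x ∧ (∀ n, x n ∈ Ioo a z) ∧ Tendsto x atTop (𝓝 z) := by
  have hmem : ∀ n, x n ∈ Ioo a z := by
    intro n
    induction n with
    | zero => exact hx0
    | succ n ih => exact hx n ▸ ⟨ih.1.trans (hg _ ih).1, (hg _ ih).2⟩
  have hmono : StrictMono x := strictMono_nat_of_lt_succ fun n => hx n ▸ (hg _ (hmem n)).1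
  have hbdd : BddAbove (range x) := ⟨z, forall_mem_range.2 fun n => (hmem n).2.le⟩
  have hlim := tendsto_atTop_ciSup hmono.monotone hbdd
  refine ⟨hmono, hmem, ?_⟩
  suffices ⨆ n, x n = z from this ▸ hlim
  refine (ciSup_le fun n => (hmem n).2.le).antisymm (not_lt.1 fun hL => ?_)
  have hL : ⨆ n, x n ∈ Ioo a z := ⟨(hmem 0).1.trans_le (le_ciSup hbdd 0), hL⟩
  have hfix : g (⨆ n, x n) = ⨆ n, x n := by
    refine tendsto_nhds_unique ((hgc _ hL).tendsto.comp hlim) ?_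
    simpa only [Function.comp_def, ← hx] using (tendsto_add_atTop_iff_nat 1).2 hlim
  exact (hg _ hL).1.ne' hfix

noncomputable section

def halleyStep (r f : ℝ → ℝ) (t : ℝ) : ℝ :=
  t - 2 * (f t / deriv f t) / (2 + r t * (f t / deriv f t) ^ 2)

def divSqrtDeriv (f : ℝ → ℝ) (t : ℝ) : ℝ := f t / √(deriv f t)

def derivDivSqrtDeriv (r f : ℝ → ℝ) (t : ℝ) : ℝ :=
  √(deriv f t) + r t * f t ^ 2 / (2 * deriv f t * √(deriv f t))

variable {r f : ℝ → ℝ} {t : ℝ}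

lemma halleyStep_neg : halleyStep r (-f) = halleyStep r f := by
  ext t
  simp only [halleyStep, deriv.neg', Pi.neg_apply, neg_div_neg_eq]

lemma halleyStep_eq_sub_div (hpos : 0 < deriv f t) :
    halleyStep r f t = t - divSqrtDeriv f t / derivDivSqrtDeriv r f t := by
  unfold halleyStep divSqrtDeriv derivDivSqrtDeriv
  set s := √(deriv f t)
  have hs : deriv f t = s ^ 2 := (Real.sq_sqrt hpos.le).symm
  have hs0 : s ≠ 0 := (Real.sqrt_pos.2 hpos).ne'
  rw [hs]
  congr 1
  field_simp

lemma continuousAt_halleyStep (hr : ContinuousAt r t) (hf : ContinuousAt f t)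
    (hf' : ContinuousAt (deriv f) t) (hne : deriv f t ≠ 0)
    (hD : 2 + r t * (f t / deriv f t) ^ 2 ≠ 0) : ContinuousAt (halleyStep r f) t := by
  unfold halleyStep
  fun_prop (disch := assumption)

lemma hasDerivAt_divSqrtDeriv (hf : DifferentiableAt ℝ f t)
    (hf' : DifferentiableAt ℝ (deriv f) t) (hpos : 0 < deriv f t)
    (hode : deriv (deriv f) t + r t * f t = 0) :
    HasDerivAt (divSqrtDeriv f) (derivDivSqrtDeriv r f t) t := by
  have hs0 : 0 < √(deriv f t) := Real.sqrt_pos.2 hpos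
  refine (hf.hasDerivAt.div (hf'.hasDerivAt.sqrt hpos.ne') hs0.ne').congr_deriv ?_
  unfold derivDivSqrtDeriv
  rw [show deriv (deriv f) t = -(r t * f t) by linarith]
  set s := √(deriv f t)
  have hs : deriv f t = s ^ 2 := (Real.sq_sqrt hpos.le).symm
  rw [hs]
  field_simp
  ring

lemma hasDerivAt_derivDivSqrtDeriv (hr : DifferentiableAt ℝ r t) (hf : DifferentiableAt ℝ f t)
    (hf' : DifferentiableAt ℝ (deriv f) t) (hpos : 0 < deriv f t)
    (hode : deriv (deriv f) t + r t * f t = 0) :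
    HasDerivAt (derivDivSqrtDeriv r f)
      (r t * f t / (2 * √(deriv f t)) + deriv r t * f t ^ 2 / (2 * deriv f t * √(deriv f t))
        + 3 * r t ^ 2 * f t ^ 3 / (4 * deriv f t ^ 2 * √(deriv f t))) t := by
  have hs0 : 0 < √(deriv f t) := Real.sqrt_pos.2 hpos
  have hsqrt := hf'.hasDerivAt.sqrt hpos.ne'
  have hden := (hf'.hasDerivAt.const_mul 2).mul hsqrt
  have hden0 : 2 * deriv f t * √(deriv f t) ≠ 0 := by positivity
  refine (hsqrt.add ((hr.hasDerivAt.mul (hf.hasDerivAt.pow 2)).div hden hden0)).congr_deriv ?_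
  simp only [Pi.mul_apply, Pi.pow_apply]
  rw [show deriv (deriv f) t = -(r t * f t) by linarith]
  set s := √(deriv f t)
  have hs : deriv f t = s ^ 2 := (Real.sq_sqrt hpos.le).symm
  rw [hs]
  field_simp
  ring

lemma strictConcaveOn_divSqrtDeriv {a b : ℝ} (hr : Differentiable ℝ r) (hf : Differentiable ℝ f)
    (hf' : Differentiable ℝ (deriv f))
    (hode : ∀ t ∈ Ioc a b, deriv (deriv f) t + r t * f t = 0)
    (hpos : ∀ t ∈ Ioc a b, 0 < deriv f t) (hfneg : ∀ t ∈ Ioo a b, f t < 0)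
    (hrpos : ∀ t ∈ Ioo a b, 0 < r t) (hrdec : ∀ t ∈ Ioo a b, deriv r t ≤ 0) :
    StrictConcaveOn ℝ (Ioc a b) (divSqrtDeriv f) := by
  have hF : ∀ t ∈ Ioc a b, HasDerivAt (divSqrtDeriv f) (derivDivSqrtDeriv r f t) t :=
    fun t ht => hasDerivAt_divSqrtDeriv (hf t) (hf' t) (hpos t ht) (hode t ht)
  have hF' : ∀ t ∈ Ioo a b, HasDerivAt (derivDivSqrtDeriv r f) _ t :=
    fun t ht => hasDerivAt_derivDivSqrtDeriv (hr t) (hf t) (hf' t) (hpos t (Ioo_subset_Ioc_self ht))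
      (hode t (Ioo_subset_Ioc_self ht))
  have hanti : StrictAntiOn (derivDivSqrtDeriv r f) (Ioo a b) := by
    refine strictAntiOn_of_hasDerivWithinAt_neg (convex_Ioo a b)
      (fun t ht => (hF' t ht).continuousAt.continuousWithinAt)
      (fun t ht => (hF' t (interior_subset ht)).hasDerivWithinAt) fun t ht => ?_
    rw [interior_Ioo] at ht
    have hft := hfneg t ht
    have hrt := hrpos t ht
    have := hpos t (Ioo_subset_Ioc_self ht)
    have h₁ : r t * f t / (2 * √(deriv f t)) < 0 :=
      div_neg_of_neg_of_pos (mul_neg_of_pos_of_neg hrt hft) (by positivity)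
    have h₂ : deriv r t * f t ^ 2 / (2 * deriv f t * √(deriv f t)) ≤ 0 :=
      div_nonpos_of_nonpos_of_nonneg (mul_nonpos_of_nonpos_of_nonneg (hrdec t ht) (sq_nonneg _))
        (by positivity)
    have h₃ : 3 * r t ^ 2 * f t ^ 3 / (4 * deriv f t ^ 2 * √(deriv f t)) < 0 :=
      div_neg_of_neg_of_pos (mul_neg_of_pos_of_neg (by positivity) (Odd.pow_neg (by decide) hft))
        (by positivity)
    linarith
  refine StrictAntiOn.strictConcaveOn_of_deriv (convex_Ioc a b)
    (fun t ht => (hF t ht).continuousAt.continuousWithinAt) ?_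
  rw [interior_Ioc]
  intro s hs t ht hst
  rw [(hF s (Ioo_subset_Ioc_self hs)).deriv, (hF t (Ioo_subset_Ioc_self ht)).deriv]
  exact hanti hs ht hst

lemma lt_halleyStep_lt_of_deriv_pos {a z b : ℝ} (hr : Differentiable ℝ r)
    (hf : Differentiable ℝ f) (hf' : Differentiable ℝ (deriv f))
    (hode : ∀ t ∈ Ioc a z, deriv (deriv f) t + r t * f t = 0)
    (hpos : ∀ t ∈ Ioc a z, 0 < deriv f t) (hfz : f z = 0)
    (hrpos : ∀ t ∈ Ioo a z, 0 < r t) (hrdec : ∀ t ∈ Ioo a z, deriv r t ≤ 0) (hb : b ∈ Ioo a z) :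
    b < halleyStep r f b ∧ halleyStep r f b < z := by
  have hz : z ∈ Ioc a z := right_mem_Ioc.2 (hb.1.trans hb.2)
  have hb' : b ∈ Ioc a z := Ioo_subset_Ioc_self hb
  have hfneg : ∀ t ∈ Ioo a z, f t < 0 := by
    have hmono : StrictMonoOn f (Ioc a z) :=
      strictMonoOn_of_deriv_pos (convex_Ioc a z) hf.continuous.continuousOn fun t ht =>
        hpos t (interior_subset ht)
    intro t ht
    exact hfz ▸ hmono (Ioo_subset_Ioc_self ht) hz ht.2
  have hFb : divSqrtDeriv f b < 0 :=
    div_neg_of_neg_of_pos (hfneg b hb) (Real.sqrt_pos.2 (hpos b hb'))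
  have hF'b : 0 < derivDivSqrtDeriv r f b := by
    have := hpos b hb'
    have := hrpos b hb
    unfold derivDivSqrtDeriv
    positivity
  rw [halleyStep_eq_sub_div (hpos b hb')]
  refine ⟨by linarith [div_neg_of_neg_of_pos hFb hF'b], ?_⟩
  exact (strictConcaveOn_divSqrtDeriv hr hf hf' hode hpos hfneg hrpos hrdec).sub_div_lt_of_hasDerivAt
    hb' hz hb.2 (hasDerivAt_divSqrtDeriv (hf b) (hf' b) (hpos b hb') (hode b hb')) hF'b
    (by rw [divSqrtDeriv, hfz, zero_div])

lemma lt_halleyStep_lt {a z b : ℝ} (hr : Differentiable ℝ r)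
    (hf : Differentiable ℝ f) (hf' : Differentiable ℝ (deriv f))
    (hode : ∀ t ∈ Ioc a z, deriv (deriv f) t + r t * f t = 0)
    (hne : ∀ t ∈ Ioc a z, deriv f t ≠ 0) (hfz : f z = 0)
    (hrpos : ∀ t ∈ Ioo a z, 0 < r t) (hrdec : ∀ t ∈ Ioo a z, deriv r t ≤ 0) (hb : b ∈ Ioo a z) :
    b < halleyStep r f b ∧ halleyStep r f b < z := by
  rcases isPreconnected_Ioc.mapsTo_Ioi_or_Iio hf'.continuous.continuousOn hne with hpos | hneg
  · exact lt_halleyStep_lt_of_deriv_pos hr hf hf' hode hpos hfz hrpos hrdec hb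
  · rw [← halleyStep_neg]
    refine lt_halleyStep_lt_of_deriv_pos hr hf.neg (by rw [deriv.neg']; exact hf'.neg)
      (fun t ht => ?_) (fun t ht => ?_) (by simp [hfz]) hrpos hrdec hb
    · simp only [deriv.neg', Pi.neg_apply, deriv.fun_neg]
      linarith [hode t ht]
    · simpa [deriv.neg'] using hneg ht

end

theorem halley_nonlocal_convergence_general (r f : ℝ → ℝ) (x' x'' xs x₀ : ℝ) (x : ℕ → ℝ)
    (hr : ContDiff ℝ 1 r)
    (hf1 : Differentiable ℝ f) (hf2 : Differentiable ℝ (deriv f))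
    (hode : ∀ t ∈ Set.Ioo x' x'', deriv (deriv f) t + r t * f t = 0)
    (hcons : ∀ t ∈ Set.Ioo x' x'', deriv f t ≠ 0)
    (hxs : xs ∈ Set.Ioo x' x'') (hfxs : f xs = 0)
    (hrpos : ∀ t ∈ Set.Ioo x' xs, 0 < r t)
    (hrdec : ∀ t ∈ Set.Ioo x' xs, deriv r t ≤ 0)
    (hx0 : x₀ ∈ Set.Ioo x' xs)
    (hseq0 : x 0 = x₀)
    (hseq : ∀ n, x (n + 1) = x n
      - 2 * (f (x n) / deriv f (x n)) / (2 + r (x n) * (f (x n) / deriv f (x n)) ^ 2)) :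
    Monotone x ∧ (∀ n, x n < xs) ∧ Filter.Tendsto x Filter.atTop (nhds xs) := by
  have hsub : Ioc x' xs ⊆ Ioo x' x'' := Ioc_subset_Ioo_right hxs.2
  have hstep : ∀ t ∈ Ioo x' xs, t < halleyStep r f t ∧ halleyStep r f t < xs :=
    fun t ht => lt_halleyStep_lt (hr.differentiable one_ne_zero) hf1 hf2
      (fun t ht => hode t (hsub ht)) (fun t ht => hcons t (hsub ht)) hfxs hrpos hrdec ht
  have hcont : ∀ t ∈ Ioo x' xs, ContinuousAt (halleyStep r f) t := fun t ht =>
    have := hrpos t ht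
    continuousAt_halleyStep hr.continuous.continuousAt hf1.continuous.continuousAt
      hf2.continuous.continuousAt (hcons t (hsub (Ioo_subset_Ioc_self ht))) (by positivity)
  obtain ⟨hmono, hmem, hlim⟩ := strictMono_tendsto_of_lt_map_lt hstep hcont (hseq0 ▸ hx0) hseq
  exact ⟨hmono.monotone, fun n => (hmem n).2, hlim⟩

theorem halley_nonlocal_convergence (r f : ℝ → ℝ) (x' x'' xs x₀ : ℝ) (x : ℕ → ℝ)
    (hr : ContDiff ℝ 1 r)
    (hf1 : Differentiable ℝ f) (hf2 : Differentiable ℝ (deriv f))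
    (hode : ∀ t ∈ Set.Ioo x' x'', deriv (deriv f) t + r t * f t = 0)
    (hnt : ∃ t ∈ Set.Ioo x' x'', f t ≠ 0)
    (hlt : x' < x'')
    (hz' : deriv f x' = 0) (hz'' : deriv f x'' = 0)
    (hcons : ∀ t ∈ Set.Ioo x' x'', deriv f t ≠ 0)
    (hxs : xs ∈ Set.Ioo x' x'') (hfxs : f xs = 0)
    (huniq : ∀ t ∈ Set.Ioo x' x'', f t = 0 → t = xs)
    (hrpos : ∀ t ∈ Set.Ioo x' xs, 0 < r t)
    (hrdec : ∀ t ∈ Set.Ioo x' xs, deriv r t ≤ 0)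
    (hx0 : x₀ ∈ Set.Ioo x' xs)
    (hseq0 : x 0 = x₀)
    (hseq : ∀ n, x (n + 1) = x n
      - 2 * (f (x n) / deriv f (x n)) / (2 + r (x n) * (f (x n) / deriv f (x n)) ^ 2)) :
    Monotone x ∧ (∀ n, x n < xs) ∧ Filter.Tendsto x Filter.atTop (nhds xs) :=
  halley_nonlocal_convergence_general r f x' x'' xs x₀ x hr hf1 hf2 hode hcons hxs hfxs hrpos hrdec
    hx0 hseq0 hseq
end

section
/- Let r be positive and non-increasing on (x', x*). Then for any initial guess x₀ ∈ (x', x*), the modified Halley iterates x_{n+1} = x_n − 2h(x_n)/(2 + r(x₀)h(x_n)²) increase monotonically and converge to x*. -/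
/-
With h = f / f', the equation f'' + r f = 0 becomes the Riccati equation h' = 1 + r h², so h
increases through its zero x* and is negative on [x₀, x*). Put c = √r(x₀). As r ≤ r(x₀) on
[x₀, x*], the function t ↦ c t - arctan (c h(t)) is nondecreasing there, which gives
arctan (-c h(t)) ≤ c (x* - t). Since 2s / (2 + s²) < arctan s for s > 0, the modified Halley step
from t lands strictly between t and x*. The iterates therefore increase and stay below x*, and
their limit is a fixed point of the step, i.e. a zero of h, i.e. x*.
-/

open Set Filter Topology Real

theorem two_mul_div_two_add_sq_lt_arctan {s : ℝ} (hs : 0 < s) : 2 * s / (2 + s ^ 2) < arctan s := by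
  let ψ : ℝ → ℝ := fun u ↦ arctan u - 2 * u / (2 + u ^ 2)
  have hψ : ∀ u, HasDerivAt ψ (u ^ 2 * (2 + 3 * u ^ 2) / ((1 + u ^ 2) * (2 + u ^ 2) ^ 2)) u := by
    intro u
    have hquot := ((hasDerivAt_id u).const_mul 2).div ((hasDerivAt_pow 2 u).const_add 2)
      (by positivity : (2 + u ^ 2 : ℝ) ≠ 0)
    refine ((hasDerivAt_arctan u).sub hquot).congr_deriv ?_
    simp only [id, Nat.cast_ofNat]
    field_simp
    ring
  have hmono : StrictMonoOn ψ (Ici 0) :=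
    strictMonoOn_of_hasDerivWithinAt_pos (convex_Ici 0)
      (fun u _ ↦ (hψ u).continuousAt.continuousWithinAt) (fun u _ ↦ (hψ u).hasDerivWithinAt)
      (fun u hu ↦ by rw [interior_Ici] at hu; have : 0 < u := hu; positivity)
  simpa [ψ] using hmono self_mem_Ici hs.le hs

theorem monotone_tendsto_of_map_mem_Ioo {g : ℝ → ℝ} {a b : ℝ} {x : ℕ → ℝ}
    (hg : ∀ t ∈ Ico a b, g t ∈ Ioo t b) (hgc : ContinuousOn g (Ico a b)) (hx0 : x 0 ∈ Ico a b)
    (hx : ∀ n, x (n + 1) = g (x n)) :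
    Monotone x ∧ (∀ n, x n < b) ∧ Tendsto x atTop (𝓝 b) := by
  have hmem : ∀ n, x n ∈ Ico a b := by
    intro n
    induction n with
    | zero => exact hx0
    | succ n ih => rw [hx]; exact ⟨ih.1.trans (hg _ ih).1.le, (hg _ ih).2⟩
  have hmono : Monotone x := monotone_nat_of_le_succ fun n ↦ hx n ▸ (hg _ (hmem n)).1.le
  have hbdd : BddAbove (range x) := ⟨b, forall_mem_range.2 fun n ↦ (hmem n).2.le⟩
  set L := ⨆ n, x n
  have hlim : Tendsto x atTop (𝓝 L) := tendsto_atTop_ciSup hmono hbdd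
  have hL : L ∈ Icc a b := ⟨(hmem 0).1.trans (le_ciSup hbdd 0), ciSup_le fun n ↦ (hmem n).2.le⟩
  refine ⟨hmono, fun n ↦ (hmem n).2, ?_⟩
  obtain hLb | hLb := hL.2.lt_or_eq
  · have hfix : g L = L := by
      refine tendsto_nhds_unique ?_ ((tendsto_add_atTop_iff_nat 1).2 hlim)
      simp only [hx]
      exact ((hgc L ⟨hL.1, hLb⟩).tendsto.comp
        (tendsto_nhdsWithin_iff.2 ⟨hlim, Eventually.of_forall hmem⟩))
    exact absurd hfix (hg L ⟨hL.1, hLb⟩).1.ne'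
  · exact hLb ▸ hlim

theorem hasDerivAt_div_deriv {f r : ℝ → ℝ} {t : ℝ} (hf : DifferentiableAt ℝ f t)
    (hf' : DifferentiableAt ℝ (deriv f) t) (hne : deriv f t ≠ 0)
    (hode : deriv (deriv f) t + r t * f t = 0) :
    HasDerivAt (fun s ↦ f s / deriv f s) (1 + r t * (f t / deriv f t) ^ 2) t := by
  refine (hf.hasDerivAt.div hf'.hasDerivAt hne).congr_deriv ?_
  rw [eq_neg_of_add_eq_zero_left hode]
  field_simp
  ring

noncomputable def modifiedHalleyStep (h : ℝ → ℝ) (R t : ℝ) : ℝ := t - 2 * h t / (2 + R * h t ^ 2)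

theorem continuousOn_modifiedHalleyStep {h : ℝ → ℝ} {R : ℝ} {s : Set ℝ} (hh : ContinuousOn h s)
    (hR : 0 ≤ R) : ContinuousOn (modifiedHalleyStep h R) s :=
  continuousOn_id.sub <| (continuousOn_const.mul hh).div
    (continuousOn_const.add (continuousOn_const.mul (hh.pow 2))) fun t _ ↦ by positivity

section Riccati

variable {r h : ℝ → ℝ} {a b : ℝ}

theorem neg_of_hasDerivAt_riccati (hh : ∀ t ∈ Icc a b, HasDerivAt h (1 + r t * h t ^ 2) t)
    (hr : ∀ t ∈ Ioo a b, 0 ≤ r t) (hb : h b = 0) {t : ℝ} (ht : t ∈ Ico a b) : h t < 0 := by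
  have hmono : StrictMonoOn h (Icc a b) :=
    strictMonoOn_of_hasDerivWithinAt_pos (convex_Icc a b)
      (fun u hu ↦ (hh u hu).continuousAt.continuousWithinAt)
      (fun u hu ↦ (hh u (interior_subset hu)).hasDerivWithinAt)
      (fun u hu ↦ by rw [interior_Icc] at hu; have := hr u hu; positivity)
  simpa [hb] using hmono (Ico_subset_Icc_self ht) (right_mem_Icc.2 (ht.1.trans ht.2.le)) ht.2

theorem monotoneOn_mul_sub_arctan (hh : ∀ t ∈ Icc a b, HasDerivAt h (1 + r t * h t ^ 2) t)
    {R : ℝ} (hR : 0 < R) (hrR : ∀ t ∈ Ioo a b, r t ≤ R) :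
    MonotoneOn (fun t ↦ √R * t - arctan (√R * h t)) (Icc a b) := by
  have hderiv : ∀ t ∈ Icc a b, HasDerivAt (fun t ↦ √R * t - arctan (√R * h t))
      (√R * (R - r t) * h t ^ 2 / (1 + R * h t ^ 2)) t := by
    intro t ht
    refine (((hasDerivAt_id t).const_mul √R).sub
      (((hh t ht).const_mul √R).arctan)).congr_deriv ?_
    rw [mul_pow, sq_sqrt hR.le]
    field_simp
    ring
  refine monotoneOn_of_hasDerivWithinAt_nonneg (convex_Icc a b)
    (fun t ht ↦ (hderiv t ht).continuousAt.continuousWithinAt)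
    (fun t ht ↦ (hderiv t (interior_subset ht)).hasDerivWithinAt) fun t ht ↦ ?_
  rw [interior_Icc] at ht
  have := sub_nonneg.2 (hrR t ht)
  positivity

theorem modifiedHalleyStep_mem_Ioo (hh : ∀ t ∈ Icc a b, HasDerivAt h (1 + r t * h t ^ 2) t)
    (hr : ∀ t ∈ Ioo a b, 0 ≤ r t) (hb : h b = 0) {R : ℝ} (hR : 0 < R)
    (hrR : ∀ t ∈ Ioo a b, r t ≤ R) {t : ℝ} (ht : t ∈ Ico a b) :
    modifiedHalleyStep h R t ∈ Ioo t b := by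
  have hneg : h t < 0 := neg_of_hasDerivAt_riccati hh hr hb ht
  have hden : 0 < 2 + R * h t ^ 2 := by positivity
  refine ⟨lt_sub_right_of_add_lt ?_, ?_⟩
  · simpa using div_neg_of_neg_of_pos (by linarith : 2 * h t < 0) hden
  set s := -(√R * h t)
  have hs : 0 < s := neg_pos.2 (mul_neg_of_pos_of_neg (sqrt_pos.2 hR) hneg)
  have hstep : √R * (modifiedHalleyStep h R t - t) = 2 * s / (2 + s ^ 2) := by
    simp only [s, modifiedHalleyStep, neg_sq, mul_pow, sq_sqrt hR.le]
    field_simp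
    ring
  have harctan : arctan s ≤ √R * (b - t) := by
    have := monotoneOn_mul_sub_arctan hh hR hrR (Ico_subset_Icc_self ht)
      (right_mem_Icc.2 (ht.1.trans ht.2.le)) ht.2.le
    simp only [hb, mul_zero, arctan_zero, sub_zero] at this
    rw [arctan_neg]
    linarith
  have := hstep ▸ (two_mul_div_two_add_sq_lt_arctan hs).trans_le harctan
  linarith [lt_of_mul_lt_mul_left this (sqrt_nonneg R)]

end Riccati

theorem modified_halley_nonlocal_convergence_general (r f : ℝ → ℝ) (x' x'' xs x₀ : ℝ) (x : ℕ → ℝ)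
    (hr : ContDiff ℝ 1 r)
    (hf1 : Differentiable ℝ f) (hf2 : Differentiable ℝ (deriv f))
    (hode : ∀ t ∈ Set.Ioo x' x'', deriv (deriv f) t + r t * f t = 0)
    (hcons : ∀ t ∈ Set.Ioo x' x'', deriv f t ≠ 0)
    (hxs : xs ∈ Set.Ioo x' x'') (hfxs : f xs = 0)
    (hrpos : ∀ t ∈ Set.Ioo x' xs, 0 < r t)
    (hrdec : ∀ t ∈ Set.Ioo x' xs, deriv r t ≤ 0)
    (hx0 : x₀ ∈ Set.Ioo x' xs)
    (hseq0 : x 0 = x₀)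
    (hseq : ∀ n, x (n + 1) = x n
      - 2 * (f (x n) / deriv f (x n)) / (2 + r x₀ * (f (x n) / deriv f (x n)) ^ 2)) :
    Monotone x ∧ (∀ n, x n < xs) ∧ Filter.Tendsto x Filter.atTop (nhds xs) := by
  obtain ⟨hx'x₀, hx₀xs⟩ := hx0
  have hIcc : Icc x₀ xs ⊆ Ioo x' x'' := Icc_subset_Ioo hx'x₀ hxs.2
  have hIoo : Ioo x₀ xs ⊆ Ioo x' xs := Ioo_subset_Ioo_left hx'x₀.le
  have hriccati : ∀ t ∈ Icc x₀ xs, HasDerivAt (fun s ↦ f s / deriv f s)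
      (1 + r t * (f t / deriv f t) ^ 2) t := fun t ht ↦
    hasDerivAt_div_deriv (hf1 t) (hf2 t) (hcons t (hIcc ht)) (hode t (hIcc ht))
  have hr₀ : 0 < r x₀ := hrpos x₀ ⟨hx'x₀, hx₀xs⟩
  have hanti : AntitoneOn r (Icc x₀ xs) :=
    antitoneOn_of_deriv_nonpos (convex_Icc _ _) hr.continuous.continuousOn
      (hr.differentiable one_ne_zero).differentiableOn
      fun t ht ↦ hrdec t (hIoo (by rwa [interior_Icc] at ht))
  have hstep : ∀ t ∈ Ico x₀ xs, modifiedHalleyStep (fun s ↦ f s / deriv f s) (r x₀) t ∈ Ioo t xs :=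
    fun t ↦ modifiedHalleyStep_mem_Ioo hriccati (fun t ht ↦ (hrpos t (hIoo ht)).le)
      (by simp [hfxs]) hr₀
      (fun t ht ↦ hanti (left_mem_Icc.2 hx₀xs.le) (Ioo_subset_Icc_self ht) ht.1.le)
  exact monotone_tendsto_of_map_mem_Ioo hstep
    (continuousOn_modifiedHalleyStep
      (fun t ht ↦ (hriccati t (Ico_subset_Icc_self ht)).continuousAt.continuousWithinAt) hr₀.le)
    (by rw [hseq0]; exact ⟨le_rfl, hx₀xs⟩) hseq

theorem modified_halley_nonlocal_convergence (r f : ℝ → ℝ) (x' x'' xs x₀ : ℝ) (x : ℕ → ℝ)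
    (hr : ContDiff ℝ 1 r)
    (hf1 : Differentiable ℝ f) (hf2 : Differentiable ℝ (deriv f))
    (hode : ∀ t ∈ Set.Ioo x' x'', deriv (deriv f) t + r t * f t = 0)
    (hnt : ∃ t ∈ Set.Ioo x' x'', f t ≠ 0)
    (hlt : x' < x'')
    (hz' : deriv f x' = 0) (hz'' : deriv f x'' = 0)
    (hcons : ∀ t ∈ Set.Ioo x' x'', deriv f t ≠ 0)
    (hxs : xs ∈ Set.Ioo x' x'') (hfxs : f xs = 0)
    (huniq : ∀ t ∈ Set.Ioo x' x'', f t = 0 → t = xs)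
    (hrpos : ∀ t ∈ Set.Ioo x' xs, 0 < r t)
    (hrdec : ∀ t ∈ Set.Ioo x' xs, deriv r t ≤ 0)
    (hx0 : x₀ ∈ Set.Ioo x' xs)
    (hseq0 : x 0 = x₀)
    (hseq : ∀ n, x (n + 1) = x n
      - 2 * (f (x n) / deriv f (x n)) / (2 + r x₀ * (f (x n) / deriv f (x n)) ^ 2)) :
    Monotone x ∧ (∀ n, x n < xs) ∧ Filter.Tendsto x Filter.atTop (nhds xs) :=
  modified_halley_nonlocal_convergence_general r f x' x'' xs x₀ x hr hf1 hf2 hode hcons hxs hfxs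
    hrpos hrdec hx0 hseq0 hseq
end

section
/- Let x* < x** be consecutive zeros of f with r positive on (x*, x**), and let β be the unique zero of f' in (x*, x**). If r is increasing on (x*, x**), then the Sturm-type bounds give x* < x** − π/√(r(x**)); if r is decreasing, then x* + π/√(r(x*)) < x**. -/
/-!
Sturm comparison with `y'' + M y = 0`, whose solution `φ t = sin (√M (t - a))` has consecutive
zeros `π / √M` apart. Let `f > 0` between consecutive zeros `a < b`, and `r < M` there. If
`b - a ≤ π / √M`, then `φ > 0` on `(a, b)` and the Wronskian `W = f φ' - f' φ` satisfies
`W' = (r - M) f φ < 0`, while `W a = 0` and `W b = - f' b φ b ≥ 0`: a contradiction.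
When `r` is monotone, its value at the right (increasing) or left (decreasing) endpoint is
such an `M`.
-/

open Set Real Filter Topology

theorem IsPreconnected.pos_or_neg_of_ne_zero {α β : Type*} [TopologicalSpace α]
    [LinearOrder β] [TopologicalSpace β] [OrderClosedTopology β] [Zero β]
    {s : Set α} {f : α → β} (hs : IsPreconnected s) (hf : ContinuousOn f s)
    (h0 : ∀ t ∈ s, f t ≠ 0) : (∀ t ∈ s, 0 < f t) ∨ ∀ t ∈ s, f t < 0 := by
  by_contra! ⟨⟨t, ht, hft⟩, ⟨u, hu, hfu⟩⟩
  obtain ⟨c, hc, hfc⟩ := hs.intermediate_value ht hu hf ⟨hft, hfu⟩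
  exact h0 c hc hfc

theorem HasDerivAt.nonpos_of_pos_of_eq_zero {f : ℝ → ℝ} {f' a b : ℝ} (hf : HasDerivAt f f' b)
    (hab : a < b) (hpos : ∀ t ∈ Ioo a b, 0 < f t) (hb : f b = 0) : f' ≤ 0 := by
  refine le_of_tendsto (hasDerivAt_iff_tendsto_slope_left_right.mp hf).1 ?_
  filter_upwards [Ioo_mem_nhdsLT hab] with t ht
  rw [slope_def_field, hb, sub_zero]
  exact div_nonpos_of_nonneg_of_nonpos (hpos t ht).le (by linarith [ht.2])

theorem hasDerivAt_wronskian_sin {f f' : ℝ → ℝ} {f'' s a t : ℝ} (hf : HasDerivAt f (f' t) t)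
    (hf' : HasDerivAt f' f'' t) :
    HasDerivAt (fun t ↦ f t * (s * cos (s * (t - a))) - f' t * sin (s * (t - a)))
      (-(s ^ 2 * f t + f'') * sin (s * (t - a))) t := by
  have hlin : HasDerivAt (fun t ↦ s * (t - a)) s t := by
    simpa using ((hasDerivAt_id t).sub_const a).const_mul s
  have hcos := ((hasDerivAt_cos _).comp t hlin).const_mul s
  have hsin := (hasDerivAt_sin _).comp t hlin
  exact ((hf.mul hcos).sub (hf'.mul hsin)).congr_deriv (by simp only [Function.comp_apply]; ring)

theorem sturm_comparison_of_pos {r f f' f'' : ℝ → ℝ} {a b M : ℝ} (hab : a < b) (hM : 0 < M)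
    (hf : ∀ t, HasDerivAt f (f' t) t) (hf' : ∀ t, HasDerivAt f' (f'' t) t)
    (hode : ∀ t ∈ Ioo a b, f'' t + r t * f t = 0) (ha : f a = 0) (hb : f b = 0)
    (hpos : ∀ t ∈ Ioo a b, 0 < f t) (hrM : ∀ t ∈ Ioo a b, r t < M) :
    π / √M < b - a := by
  set s := √M
  have hs : 0 < s := sqrt_pos.mpr hM
  have hs2 : s ^ 2 = M := sq_sqrt hM.le
  by_contra! hle
  have hsb : s * (b - a) ≤ π := by rwa [le_div_iff₀ hs, mul_comm] at hle
  set W := fun t ↦ f t * (s * cos (s * (t - a))) - f' t * sin (s * (t - a))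
  have hW (t : ℝ) := hasDerivAt_wronskian_sin (s := s) (a := a) (hf t) (hf' t)
  obtain ⟨c, hc, hWc⟩ := exists_hasDerivAt_eq_slope W _ hab
    (fun t _ ↦ (hW t).continuousAt.continuousWithinAt) fun t _ ↦ hW t
  have hsin_c : 0 < sin (s * (c - a)) := by
    refine sin_pos_of_pos_of_lt_pi (by nlinarith [hc.1]) ?_
    nlinarith [hc.2]
  have hW'c : -(s ^ 2 * f c + f'' c) * sin (s * (c - a)) < 0 := by
    have : -(s ^ 2 * f c + f'' c) = (r c - M) * f c := by rw [hs2]; linarith [hode c hc]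
    rw [this]
    exact mul_neg_of_neg_of_pos (mul_neg_of_neg_of_pos (by linarith [hrM c hc]) (hpos c hc))
      hsin_c
  have hWa : W a = 0 := by simp [W, ha]
  have hWb : 0 ≤ W b := by
    have hf'b := (hf b).nonpos_of_pos_of_eq_zero hab hpos hb
    have hsin_b : 0 ≤ sin (s * (b - a)) := sin_nonneg_of_nonneg_of_le_pi (by nlinarith) hsb
    simp only [W, hb, zero_mul, zero_sub]
    nlinarith
  rw [hWc, hWa, sub_zero] at hW'c
  exact (div_nonneg hWb (sub_pos.mpr hab).le).not_gt hW'c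

theorem sturm_comparison {r f f' f'' : ℝ → ℝ} {a b M : ℝ} (hab : a < b) (hM : 0 < M)
    (hf : ∀ t, HasDerivAt f (f' t) t) (hf' : ∀ t, HasDerivAt f' (f'' t) t)
    (hode : ∀ t ∈ Ioo a b, f'' t + r t * f t = 0) (ha : f a = 0) (hb : f b = 0)
    (hne : ∀ t ∈ Ioo a b, f t ≠ 0) (hrM : ∀ t ∈ Ioo a b, r t < M) :
    π / √M < b - a := by
  have hcont : ContinuousOn f (Ioo a b) := fun t _ ↦ (hf t).continuousAt.continuousWithinAt
  rcases isPreconnected_Ioo.pos_or_neg_of_ne_zero hcont hne with hpos | hneg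
  · exact sturm_comparison_of_pos hab hM hf hf' hode ha hb hpos hrM
  · refine sturm_comparison_of_pos (f := -f) (f' := -f') (f'' := -f'') hab hM
      (fun t ↦ (hf t).neg) (fun t ↦ (hf' t).neg) (fun t ht ↦ ?_) (by simp [ha]) (by simp [hb])
      (fun t ht ↦ neg_pos.mpr (hneg t ht)) hrM
    simp only [Pi.neg_apply]
    linarith [hode t ht]

theorem zero_distance_bounds_general (r f : ℝ → ℝ) (xs xss : ℝ) (hlt : xs < xss)
    (hr : ContDiff ℝ 1 r)
    (hrpos : ∀ t ∈ Set.Icc xs xss, 0 < r t)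
    (hf1 : Differentiable ℝ f) (hf2 : Differentiable ℝ (deriv f))
    (hode : ∀ t ∈ Set.Icc xs xss, deriv (deriv f) t + r t * f t = 0)
    (hzs : f xs = 0) (hzss : f xss = 0)
    (hcons : ∀ t ∈ Set.Ioo xs xss, f t ≠ 0) :
    ((∀ t ∈ Set.Ioo xs xss, 0 < deriv r t) → xs < xss - Real.pi / Real.sqrt (r xss))
    ∧ ((∀ t ∈ Set.Ioo xs xss, deriv r t < 0) → xs + Real.pi / Real.sqrt (r xs) < xss) := by
  have sturm (M : ℝ) (hM : 0 < M) (hrM : ∀ t ∈ Ioo xs xss, r t < M) := sturm_comparison hlt hM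
    (fun t ↦ (hf1 t).hasDerivAt) (fun t ↦ (hf2 t).hasDerivAt)
    (fun t ht ↦ hode t (Ioo_subset_Icc_self ht)) hzs hzss hcons hrM
  have hrc : ContinuousOn r (Icc xs xss) := hr.continuous.continuousOn
  have hxs : xs ∈ Icc xs xss := left_mem_Icc.mpr hlt.le
  have hxss : xss ∈ Icc xs xss := right_mem_Icc.mpr hlt.le
  refine ⟨fun hinc ↦ ?_, fun hdec ↦ ?_⟩
  · have hmono := strictMonoOn_of_deriv_pos (convex_Icc xs xss) hrc (by rwa [interior_Icc])
    have := sturm (r xss) (hrpos xss hxss) fun t ht ↦ hmono (Ioo_subset_Icc_self ht) hxss ht.2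
    linarith
  · have hanti := strictAntiOn_of_deriv_neg (convex_Icc xs xss) hrc (by rwa [interior_Icc])
    have := sturm (r xs) (hrpos xs hxs) fun t ht ↦ hanti hxs (Ioo_subset_Icc_self ht) ht.1
    linarith

theorem zero_distance_bounds (r f : ℝ → ℝ) (xs xss β : ℝ) (hlt : xs < xss)
    (hr : ContDiff ℝ 1 r)
    (hrpos : ∀ t ∈ Set.Icc xs xss, 0 < r t)
    (hf1 : Differentiable ℝ f) (hf2 : Differentiable ℝ (deriv f))
    (hode : ∀ t ∈ Set.Icc xs xss, deriv (deriv f) t + r t * f t = 0)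
    (hzs : f xs = 0) (hzss : f xss = 0)
    (hcons : ∀ t ∈ Set.Ioo xs xss, f t ≠ 0)
    (hβ : β ∈ Set.Ioo xs xss) (hfβ : deriv f β = 0)
    (hβuniq : ∀ t ∈ Set.Ioo xs xss, deriv f t = 0 → t = β) :
    ((∀ t ∈ Set.Ioo xs xss, 0 < deriv r t) → xs < xss - Real.pi / Real.sqrt (r xss))
    ∧ ((∀ t ∈ Set.Ioo xs xss, deriv r t < 0) → xs + Real.pi / Real.sqrt (r xs) < xss) :=
  zero_distance_bounds_general r f xs xss hlt hr hrpos hf1 hf2 hode hzs hzss hcons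
end

section
/- Let x* < x** be consecutive zeros of f with unique zero β of f' between them. Suppose c > 0, r'(x) > 0 on (x*, x**), and c < r(x) < 4c on (β, x**). Then the point x** − π/√(r(x**)) lies in the open interval (x*, β). -/
/-!
Both bounds come from Sturm comparison through the Wronskian `f' g - f g'`, whose derivative
is `(q - p) f g` when `f'' + p f = 0` and `g'' + q g = 0`. Comparing `f` on `[x*, x**]` with
`sin (√(r x**) (t - x*))` shows `x** - x* > π / √(r x**)`, and comparing it on `[β, x**]` with
`cos (√(r β) (t - β))` shows `x** - β < π / (2 √(r β))`. Since `r x** ≤ 4c ≤ 4 r β`, the second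
bound is at most `π / √(r x**)`, which puts `x** - π / √(r x**)` between `x*` and `β`.
-/

open Real Set Filter Topology

theorem IsPreconnected.forall_pos_or_forall_neg {X α : Type*} [TopologicalSpace X]
    [LinearOrder α] [TopologicalSpace α] [OrderClosedTopology α] [Zero α]
    {s : Set X} {f : X → α} (hs : IsPreconnected s) (hf : ContinuousOn f s)
    (hf0 : ∀ x ∈ s, f x ≠ 0) : (∀ x ∈ s, 0 < f x) ∨ ∀ x ∈ s, f x < 0 := by
  by_contra! ⟨⟨x, hx, hfx⟩, ⟨y, hy, hfy⟩⟩
  obtain ⟨z, hz, hfz⟩ := hs.intermediate_value hx hy hf ⟨hfx, hfy⟩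
  exact hf0 z hz hfz

theorem strictMonoOn_wronskian_of_lt {f f' f'' g g' g'' p q : ℝ → ℝ} {a b : ℝ}
    (hf : ∀ t ∈ Icc a b, HasDerivAt f (f' t) t) (hf' : ∀ t ∈ Icc a b, HasDerivAt f' (f'' t) t)
    (hg : ∀ t ∈ Icc a b, HasDerivAt g (g' t) t) (hg' : ∀ t ∈ Icc a b, HasDerivAt g' (g'' t) t)
    (hfeq : ∀ t ∈ Ioo a b, f'' t + p t * f t = 0) (hgeq : ∀ t ∈ Ioo a b, g'' t + q t * g t = 0)
    (hpq : ∀ t ∈ Ioo a b, p t < q t)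
    (hfpos : ∀ t ∈ Ioo a b, 0 < f t) (hgpos : ∀ t ∈ Ioo a b, 0 < g t) :
    StrictMonoOn (fun t => f' t * g t - f t * g' t) (Icc a b) := by
  have hW : ∀ t ∈ Icc a b, HasDerivAt (fun t => f' t * g t - f t * g' t)
      (f'' t * g t + f' t * g' t - (f' t * g' t + f t * g'' t)) t := fun t ht =>
    ((hf' t ht).mul (hg t ht)).sub ((hf t ht).mul (hg' t ht))
  refine strictMonoOn_of_deriv_pos (convex_Icc a b)
    (fun t ht => (hW t ht).continuousAt.continuousWithinAt) fun t ht => ?_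
  rw [interior_Icc] at ht
  rw [(hW t (Ioo_subset_Icc_self ht)).deriv]
  have hfg : 0 < (q t - p t) * (f t * g t) :=
    mul_pos (sub_pos.2 (hpq t ht)) (mul_pos (hfpos t ht) (hgpos t ht))
  linear_combination hfg - g t * hfeq t ht + f t * hgeq t ht

theorem HasDerivAt.nonpos_of_forall_Ioo_le {f : ℝ → ℝ} {f' a b : ℝ} (hab : a < b)
    (hf : HasDerivAt f f' b) (hle : ∀ t ∈ Ioo a b, f b ≤ f t) : f' ≤ 0 := by
  have hslope : Tendsto (slope f b) (𝓝[Ioo a b] b) (𝓝 f') :=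
    hf.tendsto_slope.mono_left (nhdsWithin_mono _ fun t ht => ht.2.ne)
  have : (𝓝[Ioo a b] b).NeBot := right_nhdsWithin_Ioo_neBot hab
  refine le_of_tendsto hslope ?_
  filter_upwards [self_mem_nhdsWithin] with t ht
  rw [slope_def_field]
  exact div_nonpos_of_nonneg_of_nonpos (sub_nonneg.2 (hle t ht)) (sub_nonpos.2 ht.2.le)

theorem hasDerivAt_sin_mul_sub (s a t : ℝ) :
    HasDerivAt (fun t => sin (s * (t - a))) (s * cos (s * (t - a))) t := by
  simpa [mul_comm] using ((hasDerivAt_id t).sub_const a |>.const_mul s).sin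

theorem hasDerivAt_cos_mul_sub (s a t : ℝ) :
    HasDerivAt (fun t => cos (s * (t - a))) (-(s * sin (s * (t - a)))) t := by
  simpa [mul_comm] using ((hasDerivAt_id t).sub_const a |>.const_mul s).cos

theorem pi_div_sqrt_lt_sub_of_zeros {r f f' f'' : ℝ → ℝ} {a b : ℝ} (hab : a < b)
    (hrb : 0 < r b) (hr : ∀ t ∈ Ioo a b, r t < r b)
    (hf : ∀ t ∈ Icc a b, HasDerivAt f (f' t) t) (hf' : ∀ t ∈ Icc a b, HasDerivAt f' (f'' t) t)
    (hode : ∀ t ∈ Ioo a b, f'' t + r t * f t = 0)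
    (hfa : f a = 0) (hfb : f b = 0) (hfpos : ∀ t ∈ Ioo a b, 0 < f t) :
    π / √(r b) < b - a := by
  set s := √(r b)
  have hs : 0 < s := sqrt_pos.2 hrb
  by_contra! hgap
  have hsgap : s * (b - a) ≤ π := by rwa [le_div_iff₀ hs, mul_comm] at hgap
  -- compare `f` with `sin (s (t - a))`, which has no zero in `(a, b)`
  have hW := strictMonoOn_wronskian_of_lt (g := fun t => sin (s * (t - a)))
    (g'' := fun t => s * (-(s * sin (s * (t - a))))) (q := fun _ => r b) hf hf'
    (fun t _ => hasDerivAt_sin_mul_sub s a t)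
    (fun t _ => (hasDerivAt_cos_mul_sub s a t).const_mul s) hode
    (fun t _ => by linear_combination (-sin (s * (t - a))) * mul_self_sqrt hrb.le) hr hfpos
    (fun t ht => sin_pos_of_pos_of_lt_pi (mul_pos hs (sub_pos.2 ht.1))
      (lt_of_lt_of_le (mul_lt_mul_of_pos_left (sub_lt_sub_right ht.2 a) hs) hsgap))
    (left_mem_Icc.2 hab.le) (right_mem_Icc.2 hab.le) hab
  have hf'b : f' b ≤ 0 :=
    (hf b (right_mem_Icc.2 hab.le)).nonpos_of_forall_Ioo_le hab fun t ht => hfb ▸ (hfpos t ht).le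
  have hsin : 0 ≤ sin (s * (b - a)) :=
    sin_nonneg_of_nonneg_of_le_pi (mul_nonneg hs.le (sub_nonneg.2 hab.le)) hsgap
  simp only [sub_self, mul_zero, sin_zero, hfa, hfb, zero_mul, sub_zero] at hW
  exact hW.not_ge (mul_nonpos_of_nonpos_of_nonneg hf'b hsin)

theorem sub_lt_pi_div_two_sqrt_of_deriv_eq_zero {r f f' f'' : ℝ → ℝ} {a b : ℝ}
    (hra : 0 < r a) (hr : ∀ t ∈ Ioo a b, r a < r t)
    (hf : ∀ t ∈ Icc a b, HasDerivAt f (f' t) t) (hf' : ∀ t ∈ Icc a b, HasDerivAt f' (f'' t) t)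
    (hode : ∀ t ∈ Ioo a b, f'' t + r t * f t = 0)
    (hf'a : f' a = 0) (hfb : f b = 0) (hfpos : ∀ t ∈ Ioo a b, 0 < f t) :
    b - a < π / (2 * √(r a)) := by
  set s := √(r a)
  have hs : 0 < s := sqrt_pos.2 hra
  set e := a + π / (2 * s)
  have hae : a < e := lt_add_of_pos_right a (by positivity)
  have hse : s * (e - a) = π / 2 := by
    simp only [e, add_sub_cancel_left]
    field_simp
  by_contra! heb
  replace heb : e ≤ b := by linarith
  have hsub : Ioo a e ⊆ Ioo a b := Ioo_subset_Ioo_right heb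
  -- compare `f` with `cos (s (t - a))`, which has no zero in `(a, e)`
  have hW := strictMonoOn_wronskian_of_lt (f := fun t => cos (s * (t - a)))
    (f'' := fun t => -(s * (s * cos (s * (t - a))))) (p := fun _ => r a)
    (fun t _ => hasDerivAt_cos_mul_sub s a t)
    (fun t _ => (hasDerivAt_sin_mul_sub s a t).const_mul s |>.neg)
    (fun t ht => hf t (Icc_subset_Icc_right heb ht))
    (fun t ht => hf' t (Icc_subset_Icc_right heb ht))
    (fun t _ => by linear_combination (-cos (s * (t - a))) * mul_self_sqrt hra.le)
    (fun t ht => hode t (hsub ht)) (fun t ht => hr t (hsub ht))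
    (fun t ht => cos_pos_of_mem_Ioo ⟨by nlinarith [pi_pos, ht.1], by nlinarith [ht.2]⟩)
    (fun t ht => hfpos t (hsub ht))
    (left_mem_Icc.2 hae.le) (right_mem_Icc.2 hae.le) hae
  have hfe : 0 ≤ f e := heb.eq_or_lt.elim (fun h => h ▸ hfb.ge) fun h => (hfpos e ⟨hae, h⟩).le
  simp only [sub_self, mul_zero, sin_zero, cos_zero, hse, sin_pi_div_two, cos_pi_div_two,
    hf'a, neg_zero, zero_mul, mul_one, sub_zero] at hW
  linarith [mul_nonneg hs.le hfe]

theorem sub_pi_div_sqrt_mem_Ioo {r f f' f'' : ℝ → ℝ} {a β b : ℝ} (hβ : β ∈ Ioo a b)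
    (hrβ : 0 < r β) (hr : StrictMonoOn r (Icc a b)) (hrb : r b ≤ 4 * r β)
    (hf : ∀ t ∈ Icc a b, HasDerivAt f (f' t) t) (hf' : ∀ t ∈ Icc a b, HasDerivAt f' (f'' t) t)
    (hode : ∀ t ∈ Ioo a b, f'' t + r t * f t = 0)
    (hfa : f a = 0) (hfb : f b = 0) (hf'β : f' β = 0) (hfpos : ∀ t ∈ Ioo a b, 0 < f t) :
    b - π / √(r b) ∈ Ioo a β := by
  have hab : a < b := hβ.1.trans hβ.2
  have hIcc {t} (ht : t ∈ Ioo a b) : t ∈ Icc a b := Ioo_subset_Icc_self ht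
  have hrb_pos : 0 < r b := hrβ.trans (hr (hIcc hβ) (right_mem_Icc.2 hab.le) hβ.2)
  have hlower := pi_div_sqrt_lt_sub_of_zeros hab hrb_pos
    (fun t ht => hr (hIcc ht) (right_mem_Icc.2 hab.le) ht.2) hf hf' hode hfa hfb hfpos
  have hupper := sub_lt_pi_div_two_sqrt_of_deriv_eq_zero (r := r) (f := f) hrβ
    (fun t ht => hr (hIcc hβ) (hIcc ⟨hβ.1.trans ht.1, ht.2⟩) ht.1)
    (fun t ht => hf t (Icc_subset_Icc_left hβ.1.le ht))
    (fun t ht => hf' t (Icc_subset_Icc_left hβ.1.le ht))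
    (fun t ht => hode t (Ioo_subset_Ioo_left hβ.1.le ht)) hf'β hfb
    (fun t ht => hfpos t (Ioo_subset_Ioo_left hβ.1.le ht))
  have hsqrt : √(r b) ≤ 2 * √(r β) :=
    sqrt_le_iff.2 ⟨by positivity, by rw [mul_pow, sq_sqrt hrβ.le]; linarith⟩
  have : π / (2 * √(r β)) ≤ π / √(r b) :=
    div_le_div_of_nonneg_left pi_pos.le (sqrt_pos.2 hrb_pos) hsqrt
  constructor <;> linarith

theorem initial_guess_location_general (r f : ℝ → ℝ) (xs xss β c : ℝ)
    (hr : ContDiff ℝ 1 r)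
    (hrpos : ∀ t ∈ Set.Icc xs xss, 0 < r t)
    (hf1 : Differentiable ℝ f) (hf2 : Differentiable ℝ (deriv f))
    (hode : ∀ t ∈ Set.Icc xs xss, deriv (deriv f) t + r t * f t = 0)
    (hzs : f xs = 0) (hzss : f xss = 0)
    (hcons : ∀ t ∈ Set.Ioo xs xss, f t ≠ 0)
    (hβ : β ∈ Set.Ioo xs xss) (hfβ : deriv f β = 0)
    (hrder : ∀ t ∈ Set.Ioo xs xss, 0 < deriv r t)
    (hrbd : ∀ t ∈ Set.Ioo β xss, c < r t ∧ r t < 4 * c) :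
    xss - Real.pi / Real.sqrt (r xss) ∈ Set.Ioo xs β := by
  have hrmono : StrictMonoOn r (Icc xs xss) :=
    strictMonoOn_of_deriv_pos (convex_Icc xs xss) hr.continuous.continuousOn
      (by rwa [interior_Icc])
  have hclosure : closure (Ioo β xss) = Icc β xss := closure_Ioo hβ.2.ne
  have hcβ : c ≤ r β := le_on_closure (fun t ht => (hrbd t ht).1.le) continuousOn_const
    hr.continuous.continuousOn (hclosure ▸ left_mem_Icc.2 hβ.2.le)
  have hrxss : r xss ≤ 4 * c := le_on_closure (fun t ht => (hrbd t ht).2.le)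
    hr.continuous.continuousOn continuousOn_const (hclosure ▸ right_mem_Icc.2 hβ.2.le)
  have hrβ : 0 < r β := hrpos β (Ioo_subset_Icc_self hβ)
  have hode' : ∀ t ∈ Ioo xs xss, deriv (deriv f) t + r t * f t = 0 :=
    fun t ht => hode t (Ioo_subset_Icc_self ht)
  rcases isPreconnected_Ioo.forall_pos_or_forall_neg hf1.continuous.continuousOn hcons
    with hpos | hneg
  · exact sub_pi_div_sqrt_mem_Ioo hβ hrβ hrmono (by linarith) (fun t _ => (hf1 t).hasDerivAt)
      (fun t _ => (hf2 t).hasDerivAt) hode' hzs hzss hfβ hpos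
  · exact sub_pi_div_sqrt_mem_Ioo (f := fun t => -f t) hβ hrβ hrmono (by linarith)
      (fun t _ => (hf1 t).hasDerivAt.neg) (fun t _ => (hf2 t).hasDerivAt.neg)
      (fun t ht => by linear_combination -hode' t ht) (by simp [hzs]) (by simp [hzss])
      (by simp [hfβ]) fun t ht => neg_pos.2 (hneg t ht)

theorem initial_guess_location (r f : ℝ → ℝ) (xs xss β c : ℝ) (hlt : xs < xss)
    (hc : 0 < c)
    (hr : ContDiff ℝ 1 r)
    (hrpos : ∀ t ∈ Set.Icc xs xss, 0 < r t)
    (hf1 : Differentiable ℝ f) (hf2 : Differentiable ℝ (deriv f))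
    (hode : ∀ t ∈ Set.Icc xs xss, deriv (deriv f) t + r t * f t = 0)
    (hzs : f xs = 0) (hzss : f xss = 0)
    (hcons : ∀ t ∈ Set.Ioo xs xss, f t ≠ 0)
    (hβ : β ∈ Set.Ioo xs xss) (hfβ : deriv f β = 0)
    (hβuniq : ∀ t ∈ Set.Ioo xs xss, deriv f t = 0 → t = β)
    (hrder : ∀ t ∈ Set.Ioo xs xss, 0 < deriv r t)
    (hrbd : ∀ t ∈ Set.Ioo β xss, c < r t ∧ r t < 4 * c) :
    xss - Real.pi / Real.sqrt (r xss) ∈ Set.Ioo xs β :=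
  initial_guess_location_general r f xs xss β c hr hrpos hf1 hf2 hode hzs hzss hcons hβ hfβ hrder
    hrbd
end

section
/- If r is positive and increasing on an interval, w(x) = √(r(x)), and h satisfies h' = 1 + r h², then the map t₁(x) = x − (arctan(w(x)h(x)) + π)/w(x) has derivative t₁'(x) = (w'(x)/w(x)²)·s(w(x)h(x)) with s(t) = arctan(t) + π − t/(1+t²), and hence t₁ is increasing. -/
/-!
Writing `w = √r` and `u = w h`, the equation `h' = 1 + r h²` turns the quotient rule for
`(arctan u + π) / w` into `t₁' = (w' / w²) · s(u)` with `s(t) = arctan t + π - t / (1 + t²)`.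
Since `arctan t > -π/2` and `t / (1 + t²) ≤ 1/2`, `s > 0`, so `t₁' ≥ 0` because `w` is increasing.
If `t₁` took the same value at two points, `t₁'` and hence `w'` would vanish between them, and `w`
would be constant there, contradicting strict monotonicity of `r`.
-/

open Real Set

lemma arctan_add_pi_sub_div_pos (t : ℝ) : 0 < arctan t + π - t / (1 + t ^ 2) := by
  have hden : (0 : ℝ) < 1 + t ^ 2 := by positivity
  have hhalf : t / (1 + t ^ 2) ≤ 1 / 2 := by
    rw [div_le_div_iff₀ hden two_pos]
    nlinarith [sq_nonneg (t - 1)]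
  linarith [neg_pi_div_two_lt_arctan t, pi_gt_three]

lemma hasDerivAt_sub_arctan_mul_add_pi_div {w h : ℝ → ℝ} {w' x : ℝ} (hw : HasDerivAt w w' x)
    (hwx : w x ≠ 0) (hh : HasDerivAt h (1 + w x ^ 2 * h x ^ 2) x) :
    HasDerivAt (fun y => y - (arctan (w y * h y) + π) / w y)
      (w' / w x ^ 2 * (arctan (w x * h x) + π - w x * h x / (1 + (w x * h x) ^ 2))) x := by
  refine ((hasDerivAt_id x).sub (((hw.mul hh).arctan.add_const π).div hw hwx)).congr_deriv ?_
  have hden : 1 + (w x * h x) ^ 2 ≠ 0 := by positivity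
  simp only [Pi.mul_apply]
  field_simp
  ring

/-- Unlike in `strictMonoOn_of_deriv_pos`, the derivatives may vanish at some points. -/
theorem strictMonoOn_of_hasDerivAt_pos_mul {D : Set ℝ} (hD : Convex ℝ D) (hDo : IsOpen D)
    {f g c g' : ℝ → ℝ} (hg : ∀ x ∈ D, HasDerivAt g (g' x) x) (hgmono : StrictMonoOn g D)
    (hc : ∀ x ∈ D, 0 < c x) (hf : ∀ x ∈ D, HasDerivAt f (c x * g' x) x) :
    StrictMonoOn f D := by
  have hg'_nonneg : ∀ x ∈ D, 0 ≤ g' x := fun x hx => by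
    simpa only [derivWithin_of_isOpen hDo hx, (hg x hx).deriv] using
      hgmono.monotoneOn.derivWithin_nonneg (x := x)
  have hfmono : MonotoneOn f D := by
    refine monotoneOn_of_hasDerivWithinAt_nonneg hD (f' := fun x => c x * g' x)
      (fun x hx => (hf x hx).continuousAt.continuousWithinAt) (fun x hx => ?_) fun x hx => ?_
    all_goals rw [hDo.interior_eq] at hx
    · exact (hf x hx).hasDerivWithinAt
    · exact mul_nonneg (hc x hx).le (hg'_nonneg x hx)
  intro x hx y hy hxy
  refine (hfmono hx hy hxy.le).lt_of_ne fun hfxy => ?_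
  have hIcc : Icc x y ⊆ D := hD.ordConnected.out hx hy
  have hIoo : Ioo x y ⊆ D := Ioo_subset_Icc_self.trans hIcc
  have hfconst : EqOn f (fun _ => f x) (Icc x y) := fun z hz =>
    le_antisymm (hfxy ▸ hfmono (hIcc hz) hy hz.2) (hfmono hx (hIcc hz) hz.1)
  have hg'_zero : ∀ z ∈ Ioo x y, g' z = 0 := fun z hz => by
    have hf0 : HasDerivAt f 0 z := (hasDerivAt_const z (f x)).congr_of_eventuallyEq <|
      Filter.mem_of_superset (isOpen_Ioo.mem_nhds hz) fun u hu => hfconst (Ioo_subset_Icc_self hu)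
    exact ((mul_eq_zero.1 ((hf z (hIoo hz)).unique hf0)).resolve_left (hc z (hIoo hz)).ne')
  have hganti : AntitoneOn g (Icc x y) := by
    refine antitoneOn_of_hasDerivWithinAt_nonpos (convex_Icc x y) (f' := g')
      (fun z hz => (hg z (hIcc hz)).continuousAt.continuousWithinAt) (fun z hz => ?_) fun z hz => ?_
    all_goals rw [interior_Icc] at hz
    · exact (hg z (hIoo hz)).hasDerivWithinAt
    · exact (hg'_zero z hz).le
  exact (hgmono hx hy hxy).not_ge
    (hganti (left_mem_Icc.2 hxy.le) (right_mem_Icc.2 hxy.le) hxy.le)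

theorem t1_derivative_and_increasing_general (a b : ℝ) (r h : ℝ → ℝ)
    (hr : ∀ x ∈ Set.Ioo a b, DifferentiableAt ℝ r x)
    (hrpos : ∀ x ∈ Set.Ioo a b, 0 < r x)
    (hrmono : StrictMonoOn r (Set.Ioo a b))
    (hh : ∀ x ∈ Set.Ioo a b, HasDerivAt h (1 + r x * h x ^ 2) x) :
    (∀ x ∈ Set.Ioo a b,
      deriv (fun y => y - (Real.arctan (Real.sqrt (r y) * h y) + Real.pi) / Real.sqrt (r y)) x
        = (deriv (fun y => Real.sqrt (r y)) x / (Real.sqrt (r x)) ^ 2) *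
            (Real.arctan (Real.sqrt (r x) * h x) + Real.pi
              - (Real.sqrt (r x) * h x) / (1 + (Real.sqrt (r x) * h x) ^ 2)))
    ∧ StrictMonoOn
        (fun y => y - (Real.arctan (Real.sqrt (r y) * h y) + Real.pi) / Real.sqrt (r y))
        (Set.Ioo a b) := by
  set w := fun y => √(r y)
  have hw : ∀ x ∈ Ioo a b, HasDerivAt w (deriv w x) x := fun x hx =>
    ((hr x hx).sqrt (hrpos x hx).ne').hasDerivAt
  have hwpos : ∀ x ∈ Ioo a b, 0 < w x := fun x hx => sqrt_pos.2 (hrpos x hx)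
  have hwmono : StrictMonoOn w (Ioo a b) := fun x hx y hy hxy =>
    sqrt_lt_sqrt (hrpos x hx).le (hrmono hx hy hxy)
  have ht₁ : ∀ x ∈ Ioo a b, HasDerivAt (fun y => y - (arctan (w y * h y) + π) / w y)
      (deriv w x / w x ^ 2 * (arctan (w x * h x) + π - w x * h x / (1 + (w x * h x) ^ 2))) x :=
    fun x hx => hasDerivAt_sub_arctan_mul_add_pi_div (hw x hx) (hwpos x hx).ne' <| by
      simpa only [w, sq_sqrt (hrpos x hx).le] using hh x hx
  refine ⟨fun x hx => (ht₁ x hx).deriv, ?_⟩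
  refine strictMonoOn_of_hasDerivAt_pos_mul (convex_Ioo a b) isOpen_Ioo hw hwmono
    (c := fun x => (arctan (w x * h x) + π - w x * h x / (1 + (w x * h x) ^ 2)) / w x ^ 2)
    (fun x hx => div_pos (arctan_add_pi_sub_div_pos _) (pow_pos (hwpos x hx) 2))
    fun x hx => (ht₁ x hx).congr_deriv (by ring)

theorem t1_derivative_and_increasing (a b : ℝ) (r h : ℝ → ℝ)
    (hr : ∀ x ∈ Set.Ioo a b, DifferentiableAt ℝ r x)
    (hrc : ContinuousOn (deriv r) (Set.Ioo a b))
    (hrpos : ∀ x ∈ Set.Ioo a b, 0 < r x)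
    (hrmono : StrictMonoOn r (Set.Ioo a b))
    (hh : ∀ x ∈ Set.Ioo a b, HasDerivAt h (1 + r x * h x ^ 2) x) :
    (∀ x ∈ Set.Ioo a b,
      deriv (fun y => y - (Real.arctan (Real.sqrt (r y) * h y) + Real.pi) / Real.sqrt (r y)) x
        = (deriv (fun y => Real.sqrt (r y)) x / (Real.sqrt (r x)) ^ 2) *
            (Real.arctan (Real.sqrt (r x) * h x) + Real.pi
              - (Real.sqrt (r x) * h x) / (1 + (Real.sqrt (r x) * h x) ^ 2)))
    ∧ StrictMonoOn
        (fun y => y - (Real.arctan (Real.sqrt (r y) * h y) + Real.pi) / Real.sqrt (r y))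
        (Set.Ioo a b) :=
  t1_derivative_and_increasing_general a b r h hr hrpos hrmono hh
end
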